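/- Let α ∈ (0,1) be irrational and suppose there is a constant C₁ such that for every integer n ≥ 1 and every subinterval I ⊂ [0,1) of length 1/n, there exists 1 ≤ j ≤ C₁ n with {jα} ∈ I. Then α is badly approximable: every continued fraction digit of α is less than 9C₁. -/

import Mathlib

/-!
If `a_{K+1} ≥ 9C₁`, the convergent `p/q = p_K/q_K` satisfies `|qα - p| < 1/(9C₁q)`. Writing
`j ≤ 3C₁q` as `j = qm + r` with `r < q` and `m ≤ 3C₁`, the point `{jα}` is `{rα}` shifted by
`m(qα - p)`, a shift smaller than `1/(3q)`. So applying the hypothesis with `n = 3q` to the middle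
thirds `[(3i+1)/(3q), (3i+2)/(3q))` puts a point `{rα}` with `0 < r < q` into each of the `q`
disjoint intervals `(i/q, (i+1)/q)`, which is impossible with only `q - 1` such points.
-/

/-- Complete quotients of the continued fraction of `α ∈ (0,1)`:
`cfQuot α 0 = 1/α`, and `cfQuot α (k+1) = 1/(cfQuot α k - ⌊cfQuot α k⌋)`.
The digit `a_{k+1}` is `⌊cfQuot α k⌋`. -/
noncomputable def cfQuot (α : ℝ) : ℕ → ℝ
  | 0 => 1 / α
  | k + 1 => 1 / (cfQuot α k - ⌊cfQuot α k⌋)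

/-- The `k`-th continued fraction digit `a_k` of `α ∈ (0,1)`, for `k ≥ 1`. -/
noncomputable def cfDigit (α : ℝ) (k : ℕ) : ℤ := ⌊cfQuot α (k - 1)⌋

/-- Numerators of the convergents: `p_0 = 0`, `p_1 = 1`,
`p_{k+2} = a_{k+2} p_{k+1} + p_k`. -/
noncomputable def cfP (α : ℝ) : ℕ → ℤ
  | 0 => 0
  | 1 => 1
  | k + 2 => cfDigit α (k + 2) * cfP α (k + 1) + cfP α k

/-- Denominators of the convergents: `q_0 = 1`, `q_1 = a_1`,
`q_{k+2} = a_{k+2} q_{k+1} + q_k`. -/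
noncomputable def cfQ (α : ℝ) : ℕ → ℤ
  | 0 => 1
  | 1 => cfDigit α 1
  | k + 2 => cfDigit α (k + 2) * cfQ α (k + 1) + cfQ α k

section ContinuedFraction

variable {α : ℝ}

theorem irrational_cfQuot (hirr : Irrational α) : ∀ k, Irrational (cfQuot α k)
  | 0 => by simpa [cfQuot] using hirr.inv
  | k + 1 => by
    rw [cfQuot, one_div]
    exact ((irrational_cfQuot hirr k).sub_intCast _).inv

theorem fract_cfQuot_pos (hirr : Irrational α) (k : ℕ) : 0 < Int.fract (cfQuot α k) :=
  Int.fract_pos.mpr fun h => (irrational_cfQuot hirr k).ne_int _ h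

theorem one_lt_cfQuot (hirr : Irrational α) (h0 : 0 < α) (h1 : α < 1) : ∀ k, 1 < cfQuot α k
  | 0 => one_lt_one_div h0 h1
  | k + 1 => by
    rw [cfQuot, Int.self_sub_floor]
    exact one_lt_one_div (fract_cfQuot_pos hirr k) (Int.fract_lt_one _)

theorem one_le_cfDigit (hirr : Irrational α) (h0 : 0 < α) (h1 : α < 1) (k : ℕ) :
    1 ≤ cfDigit α k :=
  Int.le_floor.mpr (by exact_mod_cast (one_lt_cfQuot hirr h0 h1 _).le)

theorem one_le_cfQ (hirr : Irrational α) (h0 : 0 < α) (h1 : α < 1) : ∀ k, 1 ≤ cfQ α k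
  | 0 => le_rfl
  | 1 => one_le_cfDigit hirr h0 h1 1
  | k + 2 => by
    have := one_le_cfDigit hirr h0 h1 (k + 2)
    have := one_le_cfQ hirr h0 h1 k
    have := one_le_cfQ hirr h0 h1 (k + 1)
    rw [cfQ]
    nlinarith

theorem cfDigit_succ_mul_cfQ_le (hirr : Irrational α) (h0 : 0 < α) (h1 : α < 1) :
    ∀ k, cfDigit α (k + 1) * cfQ α k ≤ cfQ α (k + 1)
  | 0 => by simp [cfQ]
  | k + 1 => by
    rw [cfQ]
    linarith [one_le_cfQ hirr h0 h1 k]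

/-- `cfErr α k = |q_k α - p_k|` by `cfQ_mul_sub_cfP`. -/
noncomputable def cfErr (α : ℝ) : ℕ → ℝ
  | 0 => α
  | k + 1 => cfErr α k * Int.fract (cfQuot α k)

theorem cfErr_pos (hirr : Irrational α) (h0 : 0 < α) : ∀ k, 0 < cfErr α k
  | 0 => h0
  | k + 1 => mul_pos (cfErr_pos hirr h0 k) (fract_cfQuot_pos hirr k)

theorem cfErr_add_two (hirr : Irrational α) (k : ℕ) :
    cfErr α (k + 2) = cfErr α k - cfDigit α (k + 2) * cfErr α (k + 1) := by
  have hquot : cfQuot α (k + 1) * Int.fract (cfQuot α k) = 1 := by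
    rw [cfQuot, Int.self_sub_floor, one_div_mul_cancel (fract_cfQuot_pos hirr k).ne']
  change cfErr α k * Int.fract (cfQuot α k) * Int.fract (cfQuot α (k + 1))
    = cfErr α k - ⌊cfQuot α (k + 1)⌋ * (cfErr α k * Int.fract (cfQuot α k))
  rw [← Int.self_sub_floor (cfQuot α (k + 1))]
  linear_combination cfErr α k * hquot

theorem cfQ_mul_sub_cfP (hirr : Irrational α) :
    ∀ k, (cfQ α k : ℝ) * α - cfP α k = (-1) ^ k * cfErr α k
  | 0 => by simp [cfQ, cfP, cfErr]
  | 1 => by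
    have hα := hirr.ne_zero
    simp only [cfQ, cfP, cfDigit, Nat.sub_self, cfErr, cfQuot, Int.fract]
    field_simp
    ring
  | k + 2 => by
    rw [cfQ, cfP, cfErr_add_two hirr]
    push_cast
    linear_combination (cfDigit α (k + 2) : ℝ) * cfQ_mul_sub_cfP hirr (k + 1)
      + cfQ_mul_sub_cfP hirr k

theorem cfQ_succ_mul_cfErr_add (hirr : Irrational α) :
    ∀ k, (cfQ α (k + 1) : ℝ) * cfErr α k + cfQ α k * cfErr α (k + 1) = 1
  | 0 => by
    have hα := hirr.ne_zero
    simp only [cfQ, cfDigit, Nat.sub_self, cfErr, cfQuot, Int.fract]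
    field_simp
    ring
  | k + 1 => by
    rw [cfQ, cfErr_add_two hirr]
    push_cast
    linear_combination cfQ_succ_mul_cfErr_add hirr k

theorem cfDigit_succ_mul_cfQ_mul_abs_sub_lt (hirr : Irrational α) (h0 : 0 < α) (h1 : α < 1)
    (k : ℕ) : (cfDigit α (k + 1) * cfQ α k : ℝ) * |cfQ α k * α - cfP α k| < 1 := by
  have hdigit : (cfDigit α (k + 1) * cfQ α k : ℝ) ≤ cfQ α (k + 1) := by
    exact_mod_cast cfDigit_succ_mul_cfQ_le hirr h0 h1 k
  have hq : (0 : ℝ) < cfQ α k := by exact_mod_cast one_le_cfQ hirr h0 h1 k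
  have herr := cfErr_pos hirr h0 k
  have herr' := cfErr_pos hirr h0 (k + 1)
  rw [cfQ_mul_sub_cfP hirr, abs_mul, abs_pow, abs_neg, abs_one, one_pow, one_mul,
    abs_of_pos herr]
  nlinarith [cfQ_succ_mul_cfErr_add hirr k, mul_pos hq herr']

end ContinuedFraction

theorem le_card_of_forall_exists_mem_Ioo (T : Finset ℝ) (N : ℕ)
    (h : ∀ n < N, ∃ t ∈ T, t ∈ Set.Ioo (n / N : ℝ) ((n + 1) / N)) : N ≤ T.card := by
  have hsurj : Set.SurjOn (fun t : ℝ => ⌊t * N⌋₊) T (Finset.range N) := by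
    intro n hn
    obtain ⟨t, ht, hlo, hhi⟩ := h n (Finset.mem_range.mp hn)
    have hN : (0 : ℝ) < N := by exact_mod_cast (n.zero_le.trans_lt (Finset.mem_range.mp hn))
    rw [div_lt_iff₀ hN] at hlo
    rw [lt_div_iff₀ hN] at hhi
    exact ⟨t, ht, (Nat.floor_eq_iff (n.cast_nonneg.trans hlo.le)).mpr ⟨hlo.le, hhi⟩⟩
  simpa using Finset.card_le_card_of_surjOn _ hsurj

theorem fract_mul_eq_fract_sub_of_mem_Ico {α : ℝ} {q m r : ℕ} {p : ℤ}
    (h : Int.fract (((q * m + r : ℕ) : ℝ) * α) - m * (q * α - p) ∈ Set.Ico 0 1) :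
    Int.fract (r * α) = Int.fract (((q * m + r : ℕ) : ℝ) * α) - m * (q * α - p) := by
  rw [← Int.fract_eq_self.mpr h]
  refine Int.fract_eq_fract.mpr ⟨⌊((q * m + r : ℕ) : ℝ) * α⌋ - m * p, ?_⟩
  simp only [Int.fract]
  push_cast
  ring

section Rotation

variable {α : ℝ} {q C : ℕ} {p : ℤ}

theorem exists_fract_mul_mem_Ioo (hq : 1 ≤ q) (hε : 9 * C * q * |q * α - p| < 1)
    (hA : ∀ x : ℝ, 0 ≤ x → x + 1 / (3 * q) ≤ 1 →
      ∃ j : ℕ, j ≤ C * (3 * q) ∧ Int.fract (j * α) ∈ Set.Ico x (x + 1 / (3 * q)))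
    {n : ℕ} (hn : n < q) :
    ∃ r ∈ Finset.Ioo 0 q, Int.fract (r * α) ∈ Set.Ioo (n / q : ℝ) ((n + 1) / q) := by
  have hq' : (0 : ℝ) < q := by exact_mod_cast hq
  have hnq : (n : ℝ) + 1 ≤ q := by exact_mod_cast hn
  obtain ⟨j, hjC, hj_lo, hj_hi⟩ := hA ((3 * n + 1) / (3 * q)) (by positivity) (by
    rw [← add_div, div_le_one (by positivity)]; linarith)
  set m := j / q
  set r := j % q
  have hj : q * m + r = j := Nat.div_add_mod j q
  have hm : (m : ℝ) ≤ 3 * C := by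
    have : m < 3 * C + 1 := (Nat.div_lt_iff_lt_mul hq).mpr (by nlinarith)
    exact_mod_cast Nat.lt_succ_iff.mp this
  have hshift : |m * (q * α - p)| < 1 / (3 * q) := by
    rw [abs_mul, Nat.abs_cast, lt_div_iff₀ (by positivity)]
    calc (m : ℝ) * |q * α - p| * (3 * q) ≤ 3 * C * |q * α - p| * (3 * q) := by gcongr
      _ = 9 * C * q * |q * α - p| := by ring
      _ < 1 := hε
  obtain ⟨hshift_lo, hshift_hi⟩ := abs_lt.mp hshift
  rw [← hj] at hj_lo hj_hi
  have hlo : (n / q : ℝ) < Int.fract (((q * m + r : ℕ) : ℝ) * α) - m * (q * α - p) := by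
    have : (n / q : ℝ) = (3 * n + 1) / (3 * q) - 1 / (3 * q) := by field_simp; ring
    linarith
  have hhi : Int.fract (((q * m + r : ℕ) : ℝ) * α) - m * (q * α - p) < (n + 1) / q := by
    have : ((n + 1) / q : ℝ) = (3 * n + 1) / (3 * q) + 1 / (3 * q) + 1 / (3 * q) := by
      field_simp; ring
    linarith
  have hrange : (n + 1) / q ≤ (1 : ℝ) := (div_le_one hq').mpr hnq
  have hfract := fract_mul_eq_fract_sub_of_mem_Ico
    ⟨(div_nonneg n.cast_nonneg hq'.le).trans hlo.le, hhi.trans_le hrange⟩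
  refine ⟨r, Finset.mem_Ioo.mpr ⟨Nat.pos_of_ne_zero fun hr0 => ?_, Nat.mod_lt j hq⟩, ?_⟩
  · have : Int.fract ((r : ℝ) * α) = 0 := by simp [hr0]
    linarith [div_nonneg n.cast_nonneg hq'.le]
  · rw [hfract]
    exact ⟨hlo, hhi⟩

theorem not_forall_exists_fract_mul_mem_Ico (hq : 1 ≤ q) (hε : 9 * C * q * |q * α - p| < 1) :
    ¬ ∀ x : ℝ, 0 ≤ x → x + 1 / (3 * q) ≤ 1 →
      ∃ j : ℕ, j ≤ C * (3 * q) ∧ Int.fract (j * α) ∈ Set.Ico x (x + 1 / (3 * q)) := by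
  intro hA
  have hcard := le_card_of_forall_exists_mem_Ioo
    ((Finset.Ioo 0 q).image fun r : ℕ => Int.fract (r * α)) q fun n hn => by
      obtain ⟨r, hr, hmem⟩ := exists_fract_mul_mem_Ioo hq hε hA hn
      exact ⟨_, Finset.mem_image_of_mem _ hr, hmem⟩
  have := hcard.trans Finset.card_image_le
  rw [Nat.card_Ioo] at this
  omega

end Rotation

/-- If `α ∈ (0,1)` is irrational and there is `C₁` such that for every `n ≥ 1` and every
subinterval `[x, x+1/n) ⊆ [0,1)` of length `1/n` there is `1 ≤ j ≤ C₁ n` with `{jα}` in the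
interval, then `α` is badly approximable: every continued fraction digit is less than `9C₁`. -/
theorem stmt_2 (α : ℝ) (hirr : Irrational α) (h0 : 0 < α) (h1 : α < 1) (C₁ : ℕ)
    (hA : ∀ n : ℕ, 1 ≤ n → ∀ x : ℝ, 0 ≤ x → x + 1 / n ≤ 1 →
      ∃ j : ℕ, 1 ≤ j ∧ j ≤ C₁ * n ∧
        Int.fract ((j : ℝ) * α) ∈ Set.Ico x (x + 1 / n)) :
    ∀ k : ℕ, 1 ≤ k → cfDigit α k < 9 * (C₁ : ℤ) := by
  intro k hk
  by_contra! hdigit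
  obtain ⟨K, rfl⟩ : ∃ K, k = K + 1 := ⟨k - 1, by omega⟩
  have hQ := one_le_cfQ hirr h0 h1 K
  obtain ⟨q, hq⟩ : ∃ q : ℕ, (q : ℤ) = cfQ α K := ⟨_, Int.toNat_of_nonneg (by omega)⟩
  have hε : 9 * C₁ * q * |q * α - cfP α K| < 1 := by
    have hdigit' : (9 * C₁ : ℝ) ≤ cfDigit α (K + 1) := by exact_mod_cast hdigit
    have hq' : (q : ℝ) = cfQ α K := by exact_mod_cast hq
    calc 9 * C₁ * q * |q * α - cfP α K|
        ≤ cfDigit α (K + 1) * cfQ α K * |cfQ α K * α - cfP α K| := by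
          rw [hq']; gcongr
      _ < 1 := cfDigit_succ_mul_cfQ_mul_abs_sub_lt hirr h0 h1 K
  refine not_forall_exists_fract_mul_mem_Ico (by omega) hε fun x hx hx1 => ?_
  obtain ⟨j, -, hj, hmem⟩ := hA (3 * q) (by omega) x hx (by push_cast; exact hx1)
  exact ⟨j, hj, by push_cast at hmem; exact hmem⟩
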